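/- Fix constants l > 0, g > 0, μ > 0 and a Lipschitz continuous function a : ℝ → ℝ, and let Φ be the pendulum set-valued map. Then the solutions of the differential inclusion (q̇,ṗ) ∈ Φ(q,p,t) are right-unique: for every initial condition (q₀,p₀,t₀) there exists t₁ > t₀ such that any two solutions with q(t₀) = q₀, p(t₀) = p₀ coincide on [t₀,t₁] (on the intersection of their domains). -/

import Mathlib

/-!
The dry-friction term of `hRHS` is `-(μ / l) |N| s`, where `N` is the normal reaction and `s`
lies in the subdifferential of `|·|` at `p`. That subdifferential is a monotone graph, so along
two solutions staying in a bounded set the map `Φ` is one-sided Lipschitz: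
`⟪z₁ - z₂, v₁ - v₂⟫ ≤ C ‖z₁ - z₂‖²`. Hence the squared distance `φ` of two solutions with the
same initial value satisfies `φ t = 2 ∫ ⟪x₁ - x₂, v₁ - v₂⟫ ≤ 2 C ∫ φ`, and Grönwall's inequality
forces `φ = 0`. Nothing in the argument is local, so any `t₁ > t₀` works.
-/

open MeasureTheory Set Filter

noncomputable section

/-- `s ∈ [-1, 1]` is the direction of the dry friction force. -/
def hRHS (l g μ : ℝ) (a : ℝ → ℝ) (q p t s : ℝ) : ℝ :=
  (a t / l) * Real.sin q - (μ / l) * |a t * Real.cos q - l * p ^ 2 + g * Real.sin q| * s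
    - (g / l) * Real.cos q

def Phi (l g μ : ℝ) (a : ℝ → ℝ) (q p t : ℝ) : Set (ℝ × ℝ) :=
  if p ≠ 0 then {(p, hRHS l g μ a q p t (p / |p|))}
  else {v : ℝ × ℝ | ∃ s ∈ Set.Icc (-1 : ℝ) 1, v = (0, hRHS l g μ a q 0 t s)}

def IsDISolution (F : ℝ × ℝ → ℝ → Set (ℝ × ℝ)) (I : Set ℝ) (t₀ : ℝ)
    (x : ℝ → ℝ × ℝ) : Prop :=
  ∃ v : ℝ → ℝ × ℝ, LocallyIntegrable v volume ∧
    (∀ t ∈ I, x t = x t₀ + ∫ s in t₀..t, v s) ∧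
    (∀ᵐ t ∂(volume.restrict I), v t ∈ F (x t) t)

section IntervalIntegrable

variable {E F : Type*} [NormedAddCommGroup E] [NormedAddCommGroup F]

theorem MeasureTheory.LocallyIntegrable.intervalIntegrable {f : ℝ → E}
    (hf : LocallyIntegrable f volume) (a b : ℝ) : IntervalIntegrable f volume a b :=
  (hf.integrableOn_isCompact isCompact_uIcc).intervalIntegrable

theorem IntervalIntegrable.fst [NormedSpace ℝ E] [NormedSpace ℝ F] {f : ℝ → E × F} {a b : ℝ}
    (hf : IntervalIntegrable f volume a b) :
    IntervalIntegrable (fun s => (f s).1) volume a b :=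
  ⟨hf.1.fst, hf.2.fst⟩

theorem IntervalIntegrable.snd [NormedSpace ℝ E] [NormedSpace ℝ F] {f : ℝ → E × F} {a b : ℝ}
    (hf : IntervalIntegrable f volume a b) :
    IntervalIntegrable (fun s => (f s).2) volume a b :=
  ⟨hf.1.snd, hf.2.snd⟩

end IntervalIntegrable

theorem sq_intervalIntegral_eq_two_mul_integral_primitive_mul {f : ℝ → ℝ} {a b : ℝ}
    (hf : IntervalIntegrable f volume a b) :
    (∫ s in a..b, f s) ^ 2 = 2 * ∫ s in a..b, (∫ u in a..s, f u) * f s := by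
  -- integration by parts for the absolutely continuous primitive, whose derivative is `f` a.e.
  have hY := hf.absolutelyContinuousOnInterval_intervalIntegral left_mem_uIcc
  have key := hY.integral_deriv_mul_eq_sub hY
  rw [intervalIntegral.integral_same, mul_zero, sub_zero] at key
  rw [sq, ← key, ← intervalIntegral.integral_const_mul]
  refine intervalIntegral.integral_congr_ae ?_
  filter_upwards [hf.ae_hasDerivAt_integral] with s hs hsab
  rw [(hs (uIoc_subset_uIcc hsab) a left_mem_uIcc).deriv]
  ring

theorem eqOn_zero_of_le_mul_integral {φ : ℝ → ℝ} {a b C : ℝ} (hφ : Continuous φ)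
    (hφ0 : ∀ τ ∈ Icc a b, 0 ≤ φ τ) (hle : ∀ τ ∈ Icc a b, φ τ ≤ C * ∫ s in a..τ, φ s) :
    EqOn φ 0 (Icc a b) := by
  set m : ℝ → ℝ := fun τ => ∫ s in a..τ, φ s
  have hm0 : ∀ τ ∈ Icc a b, 0 ≤ m τ := fun τ hτ =>
    intervalIntegral.integral_nonneg hτ.1 fun s hs => hφ0 s ⟨hs.1, hs.2.trans hτ.2⟩
  have hm' : ∀ τ, HasDerivAt m (φ τ) τ := fun τ => (hφ.integral_hasStrictDerivAt a τ).hasDerivAt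
  have hm : ∀ τ ∈ Icc a b, ‖m τ‖ ≤ gronwallBound 0 C 0 (τ - a) := by
    refine norm_le_gronwallBound_of_norm_deriv_right_le
      (fun τ _ => (hm' τ).continuousAt.continuousWithinAt) (fun τ _ => (hm' τ).hasDerivWithinAt)
      (by simp [m]) fun τ hτ => ?_
    rw [Real.norm_of_nonneg (hφ0 τ (Ico_subset_Icc_self hτ)),
      Real.norm_of_nonneg (hm0 τ (Ico_subset_Icc_self hτ)), add_zero]
    exact hle τ (Ico_subset_Icc_self hτ)
  intro τ hτ
  have hmτ : m τ = 0 := norm_le_zero_iff.1 ((hm τ hτ).trans_eq (gronwallBound_ε0_δ0 _ _))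
  have hφτ := hle τ hτ
  rw [show (∫ s in a..τ, φ s) = m τ from rfl, hmτ, mul_zero] at hφτ
  exact le_antisymm hφτ (hφ0 τ hτ)

theorem fst_sq_add_snd_sq_intervalIntegral {w : ℝ → ℝ × ℝ} (hw : LocallyIntegrable w volume)
    (a b : ℝ) :
    (∫ s in a..b, w s).1 ^ 2 + (∫ s in a..b, w s).2 ^ 2 =
      2 * ∫ s in a..b, ((∫ u in a..s, w u).1 * (w s).1 + (∫ u in a..s, w u).2 * (w s).2) := by
  have hwi := hw.intervalIntegrable
  have hw₁ : ∀ c d, IntervalIntegrable (fun s => (w s).1) volume c d := fun c d => (hwi c d).fst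
  have hw₂ : ∀ c d, IntervalIntegrable (fun s => (w s).2) volume c d := fun c d => (hwi c d).snd
  have hfst : ∀ c d, (∫ s in c..d, w s).1 = ∫ s in c..d, (w s).1 := fun c d =>
    ((ContinuousLinearMap.fst ℝ ℝ ℝ).intervalIntegral_comp_comm (hwi c d)).symm
  have hsnd : ∀ c d, (∫ s in c..d, w s).2 = ∫ s in c..d, (w s).2 := fun c d =>
    ((ContinuousLinearMap.snd ℝ ℝ ℝ).intervalIntegral_comp_comm (hwi c d)).symm
  simp only [hfst, hsnd]
  rw [sq_intervalIntegral_eq_two_mul_integral_primitive_mul (hw₁ a b),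
    sq_intervalIntegral_eq_two_mul_integral_primitive_mul (hw₂ a b), ← mul_add,
    ← intervalIntegral.integral_add
      ((hw₁ a b).continuousOn_mul (intervalIntegral.continuous_primitive hw₁ a).continuousOn)
      ((hw₂ a b).continuousOn_mul (intervalIntegral.continuous_primitive hw₂ a).continuousOn)]

theorem fst_sq_add_snd_sq_intervalIntegral_le {w : ℝ → ℝ × ℝ} (hw : LocallyIntegrable w volume)
    {a b C : ℝ} (hab : a ≤ b)
    (h : ∀ᵐ s ∂volume.restrict (Icc a b),
      (∫ u in a..s, w u).1 * (w s).1 + (∫ u in a..s, w u).2 * (w s).2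
        ≤ C * ((∫ u in a..s, w u).1 ^ 2 + (∫ u in a..s, w u).2 ^ 2)) :
    (∫ s in a..b, w s).1 ^ 2 + (∫ s in a..b, w s).2 ^ 2
      ≤ 2 * C * ∫ s in a..b, ((∫ u in a..s, w u).1 ^ 2 + (∫ u in a..s, w u).2 ^ 2) := by
  have hY : Continuous fun s => ∫ u in a..s, w u :=
    intervalIntegral.continuous_primitive hw.intervalIntegrable a
  have hwab := hw.intervalIntegrable a b
  calc _ = 2 * ∫ s in a..b,
        ((∫ u in a..s, w u).1 * (w s).1 + (∫ u in a..s, w u).2 * (w s).2) :=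
        fst_sq_add_snd_sq_intervalIntegral hw a b
    _ ≤ 2 * ∫ s in a..b, C * ((∫ u in a..s, w u).1 ^ 2 + (∫ u in a..s, w u).2 ^ 2) := by
        gcongr 2 * ?_
        refine intervalIntegral.integral_mono_ae_restrict hab ?_
          ((by fun_prop : Continuous _).intervalIntegrable _ _) h
        exact (hwab.fst.continuousOn_mul (continuous_fst.comp hY).continuousOn).add
          (hwab.snd.continuousOn_mul (continuous_snd.comp hY).continuousOn)
    _ = _ := by rw [intervalIntegral.integral_const_mul, mul_assoc]

namespace IsDISolution

variable {F : ℝ × ℝ → ℝ → Set (ℝ × ℝ)} {I J : Set ℝ} {t₀ : ℝ} {x : ℝ → ℝ × ℝ}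

theorem mono (hx : IsDISolution F J t₀ x) (hIJ : I ⊆ J) : IsDISolution F I t₀ x := by
  obtain ⟨v, hv, hint, hmem⟩ := hx
  exact ⟨v, hv, fun t ht => hint t (hIJ ht), ae_restrict_of_ae_restrict_of_subset hIJ hmem⟩

theorem continuousOn (hx : IsDISolution F I t₀ x) : ContinuousOn x I := by
  obtain ⟨v, hv, hint, -⟩ := hx
  exact (continuous_const.add (intervalIntegral.continuous_primitive hv.intervalIntegrable t₀)
    ).continuousOn.congr hint

theorem eqOn_of_inner_sub_le {x₁ x₂ : ℝ → ℝ × ℝ} {T C : ℝ}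
    (h₁ : IsDISolution F (Icc t₀ T) t₀ x₁) (h₂ : IsDISolution F (Icc t₀ T) t₀ x₂)
    (h₀ : x₁ t₀ = x₂ t₀)
    (hF : ∀ t ∈ Icc t₀ T, ∀ v₁ ∈ F (x₁ t) t, ∀ v₂ ∈ F (x₂ t) t,
      (x₁ t - x₂ t).1 * (v₁ - v₂).1 + (x₁ t - x₂ t).2 * (v₁ - v₂).2
        ≤ C * ((x₁ t - x₂ t).1 ^ 2 + (x₁ t - x₂ t).2 ^ 2)) :
    EqOn x₁ x₂ (Icc t₀ T) := by
  obtain ⟨v₁, hv₁, hx₁, hm₁⟩ := h₁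
  obtain ⟨v₂, hv₂, hx₂, hm₂⟩ := h₂
  have hw : LocallyIntegrable (v₁ - v₂) volume := hv₁.sub hv₂
  set Y : ℝ → ℝ × ℝ := fun τ => ∫ s in t₀..τ, (v₁ - v₂) s
  have hY : ∀ τ ∈ Icc t₀ T, x₁ τ - x₂ τ = Y τ := fun τ hτ => by
    rw [hx₁ τ hτ, hx₂ τ hτ, h₀, add_sub_add_left_eq_sub,
      ← intervalIntegral.integral_sub (hv₁.intervalIntegrable t₀ τ) (hv₂.intervalIntegrable t₀ τ)]
    rfl
  have hYc : Continuous Y := intervalIntegral.continuous_primitive hw.intervalIntegrable t₀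
  set φ : ℝ → ℝ := fun τ => (Y τ).1 ^ 2 + (Y τ).2 ^ 2
  have hφle : ∀ τ ∈ Icc t₀ T, φ τ ≤ 2 * C * ∫ s in t₀..τ, φ s := fun τ hτ => by
    have hsub : Icc t₀ τ ⊆ Icc t₀ T := Icc_subset_Icc_right hτ.2
    refine fst_sq_add_snd_sq_intervalIntegral_le hw hτ.1 ?_
    filter_upwards [ae_restrict_of_ae_restrict_of_subset hsub hm₁,
      ae_restrict_of_ae_restrict_of_subset hsub hm₂, ae_restrict_mem measurableSet_Icc]
      with s hs₁ hs₂ hs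
    have key := hF s (hsub hs) _ hs₁ _ hs₂
    rw [hY s (hsub hs)] at key
    exact key
  have hφ : EqOn φ 0 (Icc t₀ T) :=
    eqOn_zero_of_le_mul_integral (by fun_prop) (fun _ _ => by positivity) hφle
  intro τ hτ
  have hφτ : (Y τ).1 ^ 2 + (Y τ).2 ^ 2 = 0 := hφ hτ
  rw [← sub_eq_zero, hY τ hτ]
  obtain ⟨h₁, h₂⟩ := (add_eq_zero_iff_of_nonneg (sq_nonneg _) (sq_nonneg _)).1 hφτ
  exact Prod.ext (pow_eq_zero_iff two_ne_zero |>.1 h₁) (pow_eq_zero_iff two_ne_zero |>.1 h₂)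

end IsDISolution

-- The expression inside the absolute value of `hRHS`: the friction is proportional to its modulus.
def normalForce (l g : ℝ) (a : ℝ → ℝ) (q p t : ℝ) : ℝ :=
  a t * Real.cos q - l * p ^ 2 + g * Real.sin q

theorem exists_of_mem_Phi {l g μ : ℝ} {a : ℝ → ℝ} {q p t : ℝ} {v : ℝ × ℝ}
    (hv : v ∈ Phi l g μ a q p t) :
    ∃ s, |s| ≤ 1 ∧ s * p = |p| ∧ v = (p, hRHS l g μ a q p t s) := by
  by_cases hp : p = 0
  · subst hp
    rw [Phi, if_neg (not_not.2 rfl)] at hv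
    obtain ⟨s, hs, rfl⟩ := hv
    exact ⟨s, abs_le.2 hs, by simp, rfl⟩
  · rw [Phi, if_pos hp] at hv
    refine ⟨p / |p|, ?_, ?_, hv⟩
    · rw [abs_div, abs_abs, div_self (abs_ne_zero.2 hp)]
    · rw [div_mul_eq_mul_div, ← sq, ← sq_abs, sq, mul_div_cancel_right₀ _ (abs_ne_zero.2 hp)]

-- `|s| ≤ 1 ∧ s * p = |p|` says that `s` is a subgradient of `|·|` at `p`: this is the
-- monotonicity of that subdifferential.
theorem sub_mul_sub_nonneg_of_mul_eq_abs {s₁ s₂ p₁ p₂ : ℝ} (hs₁ : |s₁| ≤ 1) (hs₂ : |s₂| ≤ 1)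
    (hp₁ : s₁ * p₁ = |p₁|) (hp₂ : s₂ * p₂ = |p₂|) : 0 ≤ (s₁ - s₂) * (p₁ - p₂) := by
  have h₁ : s₁ * p₂ ≤ |p₂| :=
    (le_abs_self _).trans (by rw [abs_mul]; exact mul_le_of_le_one_left (abs_nonneg _) hs₁)
  have h₂ : s₂ * p₁ ≤ |p₁| :=
    (le_abs_self _).trans (by rw [abs_mul]; exact mul_le_of_le_one_left (abs_nonneg _) hs₂)
  nlinarith

theorem abs_normalForce_sub_le (l g : ℝ) (a : ℝ → ℝ) (q₁ p₁ q₂ p₂ t : ℝ) :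
    |normalForce l g a q₁ p₁ t - normalForce l g a q₂ p₂ t|
      ≤ (|a t| + |g|) * |q₁ - q₂| + |l| * (|p₁| + |p₂|) * |p₁ - p₂| := by
  have e : normalForce l g a q₁ p₁ t - normalForce l g a q₂ p₂ t
      = a t * (Real.cos q₁ - Real.cos q₂) + g * (Real.sin q₁ - Real.sin q₂)
        - l * (p₁ + p₂) * (p₁ - p₂) := by
    unfold normalForce; ring
  have hcos := Real.abs_cos_sub_cos_le q₁ q₂
  have hsin := Real.abs_sin_sub_sin_le q₁ q₂
  calc _ ≤ |a t| * |Real.cos q₁ - Real.cos q₂| + |g| * |Real.sin q₁ - Real.sin q₂|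
          + |l| * |p₁ + p₂| * |p₁ - p₂| := by
        rw [e, ← abs_mul, ← abs_mul, ← abs_mul, ← abs_mul]
        exact (abs_sub _ _).trans (add_le_add_left (abs_add_le _ _) _)
    _ ≤ _ := by
        rw [add_mul]
        gcongr
        exact abs_add_le p₁ p₂

theorem sub_mul_hRHS_sub_le {l g μ : ℝ} (hl : 0 < l) (hμ : 0 ≤ μ) (a : ℝ → ℝ)
    {q₁ p₁ q₂ p₂ t s₁ s₂ : ℝ} (hs₁ : |s₁| ≤ 1) (hs₂ : |s₂| ≤ 1)
    (hp₁ : s₁ * p₁ = |p₁|) (hp₂ : s₂ * p₂ = |p₂|) :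
    (p₁ - p₂) * (hRHS l g μ a q₁ p₁ t s₁ - hRHS l g μ a q₂ p₂ t s₂)
      ≤ |p₁ - p₂| * (((|a t| + |g|) * |q₁ - q₂|
          + μ * |normalForce l g a q₁ p₁ t - normalForce l g a q₂ p₂ t|) / l) := by
  set N₁ := normalForce l g a q₁ p₁ t
  set N₂ := normalForce l g a q₂ p₂ t
  set E := (a t * (Real.sin q₁ - Real.sin q₂) - g * (Real.cos q₁ - Real.cos q₂)
    - μ * ((|N₁| - |N₂|) * s₂)) / l
  -- `|N₁| s₁ - |N₂| s₂ = (|N₁| - |N₂|) s₂ + |N₁| (s₁ - s₂)`, and the last term has a sign.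
  have hsplit : (p₁ - p₂) * (hRHS l g μ a q₁ p₁ t s₁ - hRHS l g μ a q₂ p₂ t s₂)
      = (p₁ - p₂) * E - μ / l * |N₁| * ((s₁ - s₂) * (p₁ - p₂)) := by
    simp only [E, N₁, N₂, hRHS, normalForce]
    ring
  have hfriction : 0 ≤ μ / l * |N₁| * ((s₁ - s₂) * (p₁ - p₂)) := by
    have := sub_mul_sub_nonneg_of_mul_eq_abs hs₁ hs₂ hp₁ hp₂
    positivity
  have hE : |E| ≤ ((|a t| + |g|) * |q₁ - q₂| + μ * |N₁ - N₂|) / l := by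
    rw [abs_div, abs_of_pos hl]
    gcongr
    calc _ ≤ |a t| * |Real.sin q₁ - Real.sin q₂| + |g| * |Real.cos q₁ - Real.cos q₂|
          + μ * (|(|N₁| - |N₂|)| * |s₂|) := by
          rw [← abs_mul, ← abs_mul, ← abs_mul, ← abs_of_nonneg hμ, ← abs_mul, abs_of_nonneg hμ]
          exact (abs_sub _ _).trans (add_le_add_left (abs_sub _ _) _)
      _ ≤ _ := by
          rw [add_mul]
          gcongr |a t| * ?_ + |g| * ?_ + μ * ?_
          · exact Real.abs_sin_sub_sin_le q₁ q₂
          · exact Real.abs_cos_sub_cos_le q₁ q₂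
          · exact mul_le_of_le_one_right (abs_nonneg _) hs₂ |>.trans
              (abs_abs_sub_abs_le_abs_sub N₁ N₂)
  calc _ = (p₁ - p₂) * E - μ / l * |N₁| * ((s₁ - s₂) * (p₁ - p₂)) := hsplit
    _ ≤ |p₁ - p₂| * |E| := by
        rw [← abs_mul]
        linarith [le_abs_self ((p₁ - p₂) * E)]
    _ ≤ _ := by gcongr

theorem inner_sub_le_of_mem_Phi {l g μ : ℝ} (hl : 0 < l) (hμ : 0 ≤ μ) {a : ℝ → ℝ}
    {t A M₁ M₂ : ℝ} {z₁ z₂ v₁ v₂ : ℝ × ℝ} (hA : |a t| ≤ A) (hM₁ : |z₁.2| ≤ M₁)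
    (hM₂ : |z₂.2| ≤ M₂) (h₁ : v₁ ∈ Phi l g μ a z₁.1 z₁.2 t)
    (h₂ : v₂ ∈ Phi l g μ a z₂.1 z₂.2 t) :
    (z₁ - z₂).1 * (v₁ - v₂).1 + (z₁ - z₂).2 * (v₁ - v₂).2
      ≤ (1 + (1 + μ) * (A + |g|) / l + μ * (M₁ + M₂))
        * ((z₁ - z₂).1 ^ 2 + (z₁ - z₂).2 ^ 2) := by
  obtain ⟨q₁, p₁⟩ := z₁
  obtain ⟨q₂, p₂⟩ := z₂
  obtain ⟨s₁, hs₁, hp₁, rfl⟩ := exists_of_mem_Phi h₁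
  obtain ⟨s₂, hs₂, hp₂, rfl⟩ := exists_of_mem_Phi h₂
  simp only [Prod.mk_sub_mk]
  set K₁ := (1 + μ) * (A + |g|) / l
  set K₂ := μ * (M₁ + M₂)
  have hK₁ : 0 ≤ K₁ := by have := (abs_nonneg _).trans hA; positivity
  have hK₂ : 0 ≤ K₂ := by
    have := (abs_nonneg _).trans hM₁; have := (abs_nonneg _).trans hM₂; positivity
  have hvel : ((|a t| + |g|) * |q₁ - q₂|
      + μ * |normalForce l g a q₁ p₁ t - normalForce l g a q₂ p₂ t|) / l
        ≤ K₁ * |q₁ - q₂| + K₂ * |p₁ - p₂| := by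
    have hN := abs_normalForce_sub_le l g a q₁ p₁ q₂ p₂ t
    rw [abs_of_pos hl] at hN
    rw [div_le_iff₀ hl]
    calc _ ≤ (A + |g|) * |q₁ - q₂|
          + μ * ((A + |g|) * |q₁ - q₂| + l * (M₁ + M₂) * |p₁ - p₂|) := by
          gcongr
          exact hN.trans (by gcongr)
      _ = _ := by simp only [K₁, K₂]; field_simp; ring
  have hp := (sub_mul_hRHS_sub_le hl hμ a hs₁ hs₂ hp₁ hp₂).trans
    (mul_le_mul_of_nonneg_left hvel (abs_nonneg _))
  have hqp : (q₁ - q₂) * (p₁ - p₂) ≤ |q₁ - q₂| * |p₁ - p₂| := by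
    rw [← abs_mul]; exact le_abs_self _
  have hsq : 2 * (|q₁ - q₂| * |p₁ - p₂|) ≤ (q₁ - q₂) ^ 2 + (p₁ - p₂) ^ 2 := by
    rw [← sq_abs (q₁ - q₂), ← sq_abs (p₁ - p₂)]
    nlinarith [sq_nonneg (|q₁ - q₂| - |p₁ - p₂|)]
  nlinarith [sq_abs (p₁ - p₂), mul_nonneg (abs_nonneg (q₁ - q₂)) (abs_nonneg (p₁ - p₂)),
    sq_nonneg (q₁ - q₂), sq_nonneg (p₁ - p₂)]

theorem stmt6_general (l g μ : ℝ) (hl : 0 < l) (hμ : 0 < μ)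
    (a : ℝ → ℝ) (K : NNReal) (ha : LipschitzWith K a) :
    ∀ q₀ p₀ t₀ : ℝ, ∃ t₁ > t₀, ∀ s₁ s₂ : ℝ, ∀ x₁ x₂ : ℝ → ℝ × ℝ,
      IsDISolution (fun z t => Phi l g μ a z.1 z.2 t) (Set.Icc t₀ s₁) t₀ x₁ →
      x₁ t₀ = (q₀, p₀) →
      IsDISolution (fun z t => Phi l g μ a z.1 z.2 t) (Set.Icc t₀ s₂) t₀ x₂ →
      x₂ t₀ = (q₀, p₀) →
      ∀ t ∈ Set.Icc t₀ t₁ ∩ Set.Icc t₀ s₁ ∩ Set.Icc t₀ s₂, x₁ t = x₂ t := by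
  intro q₀ p₀ t₀
  refine ⟨t₀ + 1, by linarith, fun s₁ s₂ x₁ x₂ hx₁ hx₁₀ hx₂ hx₂₀ t ht => ?_⟩
  obtain ⟨⟨-, ht₀, hts₁⟩, -, hts₂⟩ := ht
  have hx₁' := hx₁.mono (Icc_subset_Icc_right (min_le_left s₁ s₂))
  have hx₂' := hx₂.mono (Icc_subset_Icc_right (min_le_right s₁ s₂))
  obtain ⟨A, hA⟩ := isCompact_Icc.exists_bound_of_continuousOn (s := Icc t₀ (min s₁ s₂))
    ha.continuous.continuousOn
  obtain ⟨M₁, hM₁⟩ := isCompact_Icc.exists_bound_of_continuousOn hx₁'.continuousOn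
  obtain ⟨M₂, hM₂⟩ := isCompact_Icc.exists_bound_of_continuousOn hx₂'.continuousOn
  refine hx₁'.eqOn_of_inner_sub_le hx₂' (hx₁₀.trans hx₂₀.symm)
    (fun τ hτ v₁ hv₁ v₂ hv₂ => inner_sub_le_of_mem_Phi hl hμ.le (hA τ hτ)
      ((norm_snd_le _).trans (hM₁ τ hτ)) ((norm_snd_le _).trans (hM₂ τ hτ)) hv₁ hv₂)
    ⟨ht₀, le_min hts₁ hts₂⟩

/-- **Right uniqueness for the pendulum differential inclusion.** For every initial
condition `(q₀, p₀, t₀)` there is `t₁ > t₀` such that any two solutions of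
`(q̇, ṗ) ∈ Φ (q, p, t)` with `(q, p) (t₀) = (q₀, p₀)` coincide on `[t₀, t₁]`
(on the intersection of their domains). -/
theorem stmt6 (l g μ : ℝ) (hl : 0 < l) (hg : 0 < g) (hμ : 0 < μ)
    (a : ℝ → ℝ) (K : NNReal) (ha : LipschitzWith K a) :
    ∀ q₀ p₀ t₀ : ℝ, ∃ t₁ > t₀, ∀ s₁ s₂ : ℝ, ∀ x₁ x₂ : ℝ → ℝ × ℝ,
      IsDISolution (fun z t => Phi l g μ a z.1 z.2 t) (Set.Icc t₀ s₁) t₀ x₁ →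
      x₁ t₀ = (q₀, p₀) →
      IsDISolution (fun z t => Phi l g μ a z.1 z.2 t) (Set.Icc t₀ s₂) t₀ x₂ →
      x₂ t₀ = (q₀, p₀) →
      ∀ t ∈ Set.Icc t₀ t₁ ∩ Set.Icc t₀ s₁ ∩ Set.Icc t₀ s₂, x₁ t = x₂ t :=
  stmt6_general l g μ hl hμ a K ha
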